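/- arXiv:0912.5084 — 5 statements merged into one kernel-verified Lean document; each statement's English description precedes it below -/
import Mathlib

section
/- Let g ≥ 1 and let M be a g×g symmetric integer matrix with M³ = M. Define the 2g×2g integer matrix Σ_M = (−M I_g; −(I_g + M²) M) in g×g block form. Then Σ_M is symplectic, i.e. ᵗΣ_M J_g Σ_M = J_g, and Σ_M² = −I_{2g}; in particular Σ_M is invertible with Σ_M⁻¹ = −Σ_M. -/
open Matrix

/-- The symplectic matrix `J_g = (0 I; -I 0)` over `ℤ`. -/
def Jmat (g : ℕ) : Matrix (Fin g ⊕ Fin g) (Fin g ⊕ Fin g) ℤ := fromBlocks 0 1 (-1) 0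

/-- The matrix `Σ_M = (-M I; -(I + M²) M)`. -/
def SigmaM (g : ℕ) (M : Matrix (Fin g) (Fin g) ℤ) :
    Matrix (Fin g ⊕ Fin g) (Fin g ⊕ Fin g) ℤ := fromBlocks (-M) 1 (-(1 + M ^ 2)) M

/-!
`Σ_M² = -1` and `ᵗΣ_M J Σ_M = J` are direct block computations, the second using `ᵗM = M`;
once `Σ_M² = -1`, the matrix `-Σ_M` is a right inverse of `Σ_M`.
-/

namespace Matrix

variable {n R : Type*} [DecidableEq n]

theorem neg_one_eq_fromBlocks [Ring R] :
    (-1 : Matrix (n ⊕ n) (n ⊕ n) R) = fromBlocks (-1) 0 0 (-1) := by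
  rw [← fromBlocks_one, fromBlocks_neg, neg_zero]

theorem fromBlocks_neg_one_neg_one_add_sq_sq [Fintype n] [Ring R] (M : Matrix n n R) :
    fromBlocks (-M) 1 (-(1 + M ^ 2)) M ^ 2 = -1 := by
  rw [sq, fromBlocks_multiply, neg_one_eq_fromBlocks, fromBlocks_inj]
  exact ⟨by noncomm_ring, by noncomm_ring, by noncomm_ring, by noncomm_ring⟩

theorem transpose_mul_fromBlocks_mul_of_transpose_eq [Fintype n] [CommRing R] {M : Matrix n n R}
    (hM : Mᵀ = M) :
    (fromBlocks (-M) 1 (-(1 + M ^ 2)) M)ᵀ * fromBlocks 0 1 (-1) 0 *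
        fromBlocks (-M) 1 (-(1 + M ^ 2)) M = fromBlocks 0 1 (-1) 0 := by
  have hM2 : (M ^ 2)ᵀ = M ^ 2 := by rw [transpose_pow, hM]
  rw [fromBlocks_transpose, fromBlocks_multiply, fromBlocks_multiply, fromBlocks_inj]
  simp only [transpose_neg, transpose_add, transpose_one, hM, hM2]
  exact ⟨by noncomm_ring, by noncomm_ring, by noncomm_ring, by noncomm_ring⟩

theorem mul_neg_self_of_sq_eq_neg_one [Fintype n] [Ring R] {A : Matrix n n R} (hA : A ^ 2 = -1) :
    A * -A = 1 := by
  rw [mul_neg, ← sq, hA, neg_neg]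

end Matrix

theorem stmt_3_general (g : ℕ) (M : Matrix (Fin g) (Fin g) ℤ)
    (hsym : Mᵀ = M) :
    (SigmaM g M)ᵀ * Jmat g * SigmaM g M = Jmat g ∧
    SigmaM g M ^ 2 = -1 ∧
    IsUnit (SigmaM g M).det ∧
    (SigmaM g M)⁻¹ = -SigmaM g M := by
  have hsq : SigmaM g M ^ 2 = -1 := fromBlocks_neg_one_neg_one_add_sq_sq M
  have hinv := mul_neg_self_of_sq_eq_neg_one hsq
  exact ⟨transpose_mul_fromBlocks_mul_of_transpose_eq hsym, hsq,
    isUnit_det_of_right_inverse hinv, inv_eq_right_inv hinv⟩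

/-- For `M` symmetric with `M³ = M`, `Σ_M` is symplectic, `Σ_M² = -I`, and
`Σ_M` is invertible with `Σ_M⁻¹ = -Σ_M`. -/
theorem stmt_3 (g : ℕ) (hg : 1 ≤ g) (M : Matrix (Fin g) (Fin g) ℤ)
    (hsym : Mᵀ = M) (hM3 : M ^ 3 = M) :
    (SigmaM g M)ᵀ * Jmat g * SigmaM g M = Jmat g ∧
    SigmaM g M ^ 2 = -1 ∧
    IsUnit (SigmaM g M).det ∧
    (SigmaM g M)⁻¹ = -SigmaM g M :=
  stmt_3_general g M hsym
end

section
/- Let g ≥ 1 and let M be a g×g symmetric integer matrix with M³ = M. With Σ_M = (−M I_g; −(I_g + M²) M) in g×g block form, the transpose ᵗΣ_M is invertible and (ᵗΣ_M)⁻¹ · (−I_g 0; M I_g) · ᵗΣ_M = (I_g 0; −M −I_g); equivalently, (−I_g 0; M I_g) · ᵗΣ_M = ᵗΣ_M · (I_g 0; −M −I_g). -/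
open Matrix

/-- For `M` symmetric with `M³ = M`, the transpose `ᵗΣ_M` is invertible and
`(ᵗΣ_M)⁻¹ (−I 0; M I) ᵗΣ_M = (I 0; −M −I)`; equivalently
`(−I 0; M I) ᵗΣ_M = ᵗΣ_M (I 0; −M −I)`. -/
theorem stmt_4 (g : ℕ) (hg : 1 ≤ g) (M : Matrix (Fin g) (Fin g) ℤ)
    (hsym : Mᵀ = M) (hM3 : M ^ 3 = M) :
    IsUnit ((SigmaM g M)ᵀ).det ∧
    ((SigmaM g M)ᵀ)⁻¹ * fromBlocks (-1) 0 M 1 * (SigmaM g M)ᵀ = fromBlocks 1 0 (-M) (-1) ∧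
    fromBlocks (-1) 0 M 1 * (SigmaM g M)ᵀ = (SigmaM g M)ᵀ * fromBlocks 1 0 (-M) (-1) := by
  have h3 : M * M * M = M := by
    have := hM3; rwa [pow_succ, pow_two] at this
  have hT : (SigmaM g M)ᵀ = fromBlocks (-M) (-(1 + M ^ 2)) 1 M := by
    rw [SigmaM, fromBlocks_transpose]
    simp [hsym, transpose_add, transpose_pow]
  have hcomm : fromBlocks (-1) 0 M 1 * (SigmaM g M)ᵀ =
      (SigmaM g M)ᵀ * fromBlocks 1 0 (-M) (-1) := by
    rw [hT, fromBlocks_multiply, fromBlocks_multiply, fromBlocks_inj]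
    refine ⟨?_, ?_, ?_, ?_⟩ <;>
      · simp only [mul_add, add_mul, mul_one, one_mul, neg_mul, mul_neg, neg_neg, mul_zero,
          zero_mul, neg_zero, pow_two, ← mul_assoc, h3]
        abel
  have hinv : (SigmaM g M)ᵀ * fromBlocks M (1 + M ^ 2) (-1) (-M) = 1 := by
    rw [hT, fromBlocks_multiply, ← fromBlocks_one, fromBlocks_inj]
    refine ⟨?_, ?_, ?_, ?_⟩ <;>
      · simp only [mul_add, add_mul, mul_one, one_mul, neg_mul, mul_neg, neg_neg, mul_zero,
          zero_mul, neg_zero, pow_two, ← mul_assoc, h3]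
        abel
  have hinv' : fromBlocks M (1 + M ^ 2) (-1) (-M) * (SigmaM g M)ᵀ = 1 := by
    rw [hT, fromBlocks_multiply, ← fromBlocks_one, fromBlocks_inj]
    refine ⟨?_, ?_, ?_, ?_⟩ <;>
      · simp only [mul_add, add_mul, mul_one, one_mul, neg_mul, mul_neg, neg_neg, mul_zero,
          zero_mul, neg_zero, pow_two, ← mul_assoc, h3]
        abel
  haveI : Invertible ((SigmaM g M)ᵀ) := ⟨_, hinv', hinv⟩
  have hu : IsUnit ((SigmaM g M)ᵀ).det := isUnit_det_of_invertible _
  refine ⟨hu, ?_, hcomm⟩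
  rw [mul_assoc, hcomm, ← mul_assoc, nonsing_inv_mul _ hu, one_mul]
end

section
/- Let g ≥ 1, let M be a g×g symmetric real matrix with M³ = M, and let Y ∈ P_g. Then: (i) I_g + M² is invertible with (I_g + M²)⁻¹ = I_g − (1/2)M²; (ii) over ℂ, the matrix −(I_g + M²)((1/2)M + iY) + M equals −i(I_g + M²)Y and is invertible; and (iii) the fractional linear action of Σ_M = (−M I_g; −(I_g+M²) M) on Ω = (1/2)M + iY is given by (−M·Ω + I_g)·(−(I_g + M²)·Ω + M)⁻¹ = (1/2)M + i·(I_g − (1/2)M²)·Y⁻¹·(I_g − (1/2)M²). -/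
open Matrix

/-- For `M` real symmetric with `M³ = M` and `Y ∈ P_g`:
(i) `(I + M²)⁻¹ = I − (1/2)M²`;
(ii) `−(I + M²)((1/2)M + iY) + M = −i(I + M²)Y`, which is invertible;
(iii) the fractional linear action of `Σ_M` on `Ω = (1/2)M + iY` is
`(1/2)M + i(I − (1/2)M²)Y⁻¹(I − (1/2)M²)`. -/
theorem stmt_5 (g : ℕ) (hg : 1 ≤ g) (M Y : Matrix (Fin g) (Fin g) ℝ)
    (hsym : Mᵀ = M) (hM3 : M ^ 3 = M) (hYsym : Yᵀ = Y) (hY : Y.PosDef) :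
    ((1 + M ^ 2) * (1 - (2⁻¹ : ℝ) • M ^ 2) = 1 ∧
      (1 - (2⁻¹ : ℝ) • M ^ 2) * (1 + M ^ 2) = 1) ∧
    (-((1 + M ^ 2).map Complex.ofReal) *
          ((2⁻¹ : ℂ) • M.map Complex.ofReal + Complex.I • Y.map Complex.ofReal) +
        M.map Complex.ofReal =
      -(Complex.I • ((1 + M ^ 2) * Y).map Complex.ofReal) ∧
      IsUnit (-((1 + M ^ 2).map Complex.ofReal) *
          ((2⁻¹ : ℂ) • M.map Complex.ofReal + Complex.I • Y.map Complex.ofReal) +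
        M.map Complex.ofReal).det) ∧
    (-(M.map Complex.ofReal) *
          ((2⁻¹ : ℂ) • M.map Complex.ofReal + Complex.I • Y.map Complex.ofReal) + 1) *
        (-((1 + M ^ 2).map Complex.ofReal) *
          ((2⁻¹ : ℂ) • M.map Complex.ofReal + Complex.I • Y.map Complex.ofReal) +
          M.map Complex.ofReal)⁻¹ =
      (2⁻¹ : ℂ) • M.map Complex.ofReal +
        Complex.I •
          ((1 - (2⁻¹ : ℝ) • M ^ 2) * Y⁻¹ * (1 - (2⁻¹ : ℝ) • M ^ 2)).map Complex.ofReal := by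
  -- basic real facts
  have h4 : M ^ 2 * M ^ 2 = M ^ 2 := by
    have e : M ^ 2 * M ^ 2 = M ^ 3 * M := by
      rw [← pow_add, ← pow_succ]
    rw [e, hM3, ← sq]
  have h1 : (1 + M ^ 2) * (1 - (2⁻¹ : ℝ) • M ^ 2) = 1 := by
    simp only [mul_sub, sub_mul, add_mul, mul_add, one_mul, mul_one, mul_smul_comm,
      smul_mul_assoc, h4]
    module
  have h2 : (1 - (2⁻¹ : ℝ) • M ^ 2) * (1 + M ^ 2) = 1 := by
    simp only [mul_sub, sub_mul, add_mul, mul_add, one_mul, mul_one, mul_smul_comm,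
      smul_mul_assoc, h4]
    module
  -- complex side
  set m : Matrix (Fin g) (Fin g) ℂ := M.map Complex.ofReal with hm
  set y : Matrix (Fin g) (Fin g) ℂ := Y.map Complex.ofReal with hy'
  have mapmul : ∀ A B : Matrix (Fin g) (Fin g) ℝ,
      (A * B).map Complex.ofReal = A.map Complex.ofReal * B.map Complex.ofReal :=
    fun A B => Matrix.map_mul (f := Complex.ofRealHom)
  have mapone : (1 : Matrix (Fin g) (Fin g) ℝ).map Complex.ofReal = 1 := by simp
  have mapadd : ∀ A B : Matrix (Fin g) (Fin g) ℝ,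
      (A + B).map Complex.ofReal = A.map Complex.ofReal + B.map Complex.ofReal := by
    intro A B; ext i j; simp
  have mapsub : ∀ A B : Matrix (Fin g) (Fin g) ℝ,
      (A - B).map Complex.ofReal = A.map Complex.ofReal - B.map Complex.ofReal := by
    intro A B; ext i j; simp
  have mapsmul : ∀ (r : ℝ) (A : Matrix (Fin g) (Fin g) ℝ),
      (r • A).map Complex.ofReal = (r : ℂ) • A.map Complex.ofReal := by
    intro r A; ext i j; simp
  have hm2 : (M ^ 2).map Complex.ofReal = m * m := by
    rw [sq]; exact mapmul M M
  have hmm3 : m * (m * m) = m := by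
    have e := congrArg (fun A => A.map Complex.ofReal) hM3
    simp only [pow_succ, pow_zero, one_mul, mapmul] at e
    rw [← hm] at e
    rw [← mul_assoc]
    exact e
  have hYdet : IsUnit Y.det := isUnit_iff_ne_zero.mpr hY.det_pos.ne'
  set yi : Matrix (Fin g) (Fin g) ℂ := (Y⁻¹).map Complex.ofReal with hyidef
  have hyi : y * yi = 1 := by
    rw [hyidef, hy', ← mapmul, Matrix.mul_nonsing_inv Y hYdet, mapone]
  have hc1 : (1 + m * m) * (1 - (2⁻¹ : ℂ) • (m * m)) = 1 := by
    have e := congrArg (fun A => A.map Complex.ofReal) h1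
    simpa [mapmul, mapadd, mapsub, mapsmul, mapone, hm2] using e
  have hmapsum : (1 + M ^ 2).map Complex.ofReal = 1 + m * m := by
    rw [mapadd, mapone, hm2]
  set c : Matrix (Fin g) (Fin g) ℂ := 1 - (2⁻¹ : ℂ) • (m * m) with hcdef
  have hmc : m * c = (2⁻¹ : ℂ) • m := by
    rw [hcdef, mul_sub, mul_one, mul_smul_comm, hmm3]
    module
  have hyc : y * (yi * c) = c := by rw [← mul_assoc, hyi, one_mul]
  -- part (ii) equation
  have hii : -((1 + M ^ 2).map Complex.ofReal) *
        ((2⁻¹ : ℂ) • m + Complex.I • y) + m =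
      -(Complex.I • ((1 + M ^ 2) * Y).map Complex.ofReal) := by
    rw [hmapsum, mapmul, hmapsum, ← hy']
    simp only [neg_mul, mul_add, add_mul, one_mul, mul_smul_comm, smul_mul_assoc]
    rw [show m * m * m = m by rw [mul_assoc, hmm3]]
    module
  have hA : ((1 + M ^ 2) * Y).map Complex.ofReal = (1 + m * m) * y := by
    rw [mapmul, hmapsum, ← hy']
  -- right inverse of the denominator
  have key : (-(Complex.I • ((1 + M ^ 2) * Y).map Complex.ofReal)) *
      (Complex.I • (yi * c)) = 1 := by
    rw [hA]
    simp only [neg_mul, smul_mul_assoc, mul_smul_comm, smul_smul, Complex.I_mul_I,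
      neg_one_smul, neg_neg]
    rw [mul_assoc (1 + m * m) y (yi * c), hyc, hc1]
    simp [smul_smul, Complex.I_mul_I]
  have hdet : IsUnit (-(Complex.I • ((1 + M ^ 2) * Y).map Complex.ofReal)).det :=
    Matrix.isUnit_det_of_right_inverse key
  have hinv : (-(Complex.I • ((1 + M ^ 2) * Y).map Complex.ofReal))⁻¹ =
      Complex.I • (yi * c) := Matrix.inv_eq_right_inv key
  refine ⟨⟨h1, h2⟩, ⟨hii, hii ▸ hdet⟩, ?_⟩
  -- part (iii)
  rw [hii, hinv]
  have hRHS : ((1 - (2⁻¹ : ℝ) • M ^ 2) * Y⁻¹ * (1 - (2⁻¹ : ℝ) • M ^ 2)).map Complex.ofReal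
      = c * (yi * c) := by
    rw [mapmul, mapmul, mapsub, mapsmul, mapone, hm2, ← hyidef]
    rw [show ((2⁻¹ : ℝ) : ℂ) = (2⁻¹ : ℂ) by norm_num, ← hcdef, mul_assoc]
  rw [hRHS]
  have e1 : -m * ((2⁻¹ : ℂ) • m + Complex.I • y) + 1 = c - Complex.I • (m * y) := by
    rw [hcdef]
    simp only [neg_mul, mul_add, mul_smul_comm]
    module
  rw [e1, sub_mul]
  rw [mul_smul_comm Complex.I c (yi * c), smul_mul_assoc, mul_smul_comm, smul_smul,
    Complex.I_mul_I, neg_one_smul, mul_assoc m y (yi * c), hyc, hmc]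
  module
end

section
/- (Albert) Let g ≥ 1 and let N = (n_{ij}) be a g×g symmetric matrix over the field ℤ/2ℤ. Let λ = rank(N) and π(N) = ∏_{k=1}^g (1 − n_{kk}) ∈ ℤ/2ℤ. Then there exists A ∈ GL(g, ℤ/2ℤ) such that: if π(N) = 0, then A N ᵗA = (I_λ 0; 0 0); and if π(N) = 1, then A N ᵗA = (H_λ 0; 0 0), where H_λ is the λ×λ matrix whose (i,j) entry is 1 if i + j = λ + 1 and 0 otherwise. -/
/-!
Over `𝔽₂` congruence `N ↦ A N Aᵀ` is a change of basis for the symmetric bilinear form with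
Gram matrix `N`, and `π(N) = 1` exactly when the form is alternating (zero diagonal).
In both cases one splits off a nondegenerate block and recurses on its orthogonal complement,
given by the Schur complement.

* Alternating: a nonzero entry `N i j = 1` spans a hyperbolic plane `[[0,1],[1,0]]`, and the
  complement stays alternating. Hence `N` is congruent to a sum of hyperbolic planes and zeros,
  encoded by an involution `τ`; all involutions with the same number of moved points are
  conjugate, so a permutation turns this into the antidiagonal `H_λ`.
* Non-alternating: a diagonal entry `N i i = 1` splits off a `1`. If the complement `S` is
  alternating but nonzero, a shear first makes it non-alternating. Hence `N` is congruent to a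
  diagonal matrix, which a permutation sorts into `I_λ`.

In both cases `λ` is the rank because congruence preserves rank.
-/

open Matrix

namespace Matrix

section Blocks

variable {ι s t α : Type*}

theorem submatrix_sumCompl (M : Matrix ι ι α) (p : ι → Prop) [DecidablePred p] :
    M.submatrix (Equiv.sumCompl p) (Equiv.sumCompl p) =
      fromBlocks (M.toBlock p p) (M.toBlock p (¬p ·)) (M.toBlock (¬p ·) p)
        (M.toBlock (¬p ·) (¬p ·)) := by
  ext (i | i) (j | j) <;> rfl

theorem transpose_toBlock {M : Matrix ι ι α} (hM : Mᵀ = M) (p q : ι → Prop) :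
    (M.toBlock p q)ᵀ = M.toBlock q p := by
  ext i j; exact congrFun (congrFun hM i) j

theorem transpose_eq_of_fromBlocks [Zero α] {B : Matrix s s α} {S : Matrix t t α}
    (h : (fromBlocks B 0 0 S)ᵀ = fromBlocks B 0 0 S) : Sᵀ = S := by
  simpa [fromBlocks_transpose] using congrArg toBlocks₂₂ h

end Blocks

section CommRing

variable {ι κ s t R : Type*} [Fintype ι] [Fintype κ] [Fintype s] [Fintype t] [CommRing R]

theorem vecMul_dotProduct_self_eq_zero {M : Matrix ι ι R} (hM : Mᵀ = -M)
    (hd : ∀ i, M i i = 0) (x : ι → R) : x ᵥ* M ⬝ᵥ x = 0 := by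
  have hskew : ∀ j k, M k j = -M j k := fun j k => by
    simpa using congrFun (congrFun hM j) k
  simp only [dotProduct, vecMul, Finset.sum_mul, ← Finset.sum_product']
  refine Finset.sum_involution (fun p _ => p.swap) (fun p _ => ?_) (fun p _ h hp => h ?_)
    (fun p _ => Finset.mem_univ _) (fun p _ => rfl)
  · simp only [Prod.fst_swap, Prod.snd_swap, hskew p.1 p.2]; ring
  · simp [show p.2 = p.1 from congrArg Prod.fst hp, hd]

variable [DecidableEq ι] [DecidableEq κ] [DecidableEq s] [DecidableEq t]

def Congruent (M N : Matrix ι ι R) : Prop :=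
  ∃ A : Matrix ι ι R, IsUnit A.det ∧ A * M * Aᵀ = N

namespace Congruent

theorem refl (M : Matrix ι ι R) : Congruent M M := ⟨1, by simp, by simp⟩

theorem of_eq {M N : Matrix ι ι R} (h : M = N) : Congruent M N := h ▸ refl M

theorem symm {M N : Matrix ι ι R} : Congruent M N → Congruent N M := by
  rintro ⟨A, hA, rfl⟩
  have hAt : IsUnit Aᵀ.det := by rwa [det_transpose]
  refine ⟨A⁻¹, isUnit_nonsing_inv_det A hA, ?_⟩
  rw [transpose_nonsing_inv, ← Matrix.mul_assoc, ← Matrix.mul_assoc, nonsing_inv_mul A hA,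
    Matrix.one_mul, Matrix.mul_assoc, mul_nonsing_inv _ hAt, Matrix.mul_one]

theorem trans {M N P : Matrix ι ι R} : Congruent M N → Congruent N P → Congruent M P := by
  rintro ⟨A, hA, rfl⟩ ⟨B, hB, rfl⟩
  exact ⟨B * A, by rw [det_mul]; exact hB.mul hA,
    by simp only [transpose_mul, Matrix.mul_assoc]⟩

theorem submatrix {M N : Matrix ι ι R} (h : Congruent M N) (e : κ ≃ ι) :
    Congruent (M.submatrix e e) (N.submatrix e e) := by
  obtain ⟨A, hA, rfl⟩ := h
  refine ⟨A.submatrix e e, by rwa [det_submatrix_equiv_self], ?_⟩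
  rw [transpose_submatrix, submatrix_mul_equiv, submatrix_mul_equiv]

theorem of_submatrix {M : Matrix ι ι R} {N : Matrix κ κ R} {e : κ ≃ ι}
    (h : Congruent (M.submatrix e e) N) : Congruent M (N.submatrix e.symm e.symm) := by
  simpa using h.submatrix e.symm

theorem fromBlocks {B B' : Matrix s s R} {D D' : Matrix t t R} (hB : Congruent B B')
    (hD : Congruent D D') : Congruent (fromBlocks B 0 0 D) (fromBlocks B' 0 0 D') := by
  obtain ⟨A₁, hA₁, rfl⟩ := hB
  obtain ⟨A₂, hA₂, rfl⟩ := hD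
  refine ⟨Matrix.fromBlocks A₁ 0 0 A₂, ?_, ?_⟩
  · rw [det_fromBlocks_zero₂₁]; exact hA₁.mul hA₂
  · simp [fromBlocks_transpose, fromBlocks_multiply]

theorem transpose_eq {M N : Matrix ι ι R} (h : Congruent M N) (hM : Mᵀ = M) : Nᵀ = N := by
  obtain ⟨A, -, rfl⟩ := h
  rw [transpose_mul, transpose_mul, transpose_transpose, hM, Matrix.mul_assoc]

theorem rank_eq {K : Type*} [Field K] {M N : Matrix ι ι K} (h : Congruent M N) :
    N.rank = M.rank := by
  obtain ⟨A, hA, rfl⟩ := h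
  rw [Matrix.mul_assoc, rank_mul_eq_right_of_isUnit_det A _ hA,
    rank_mul_eq_left_of_isUnit_det Aᵀ M (by rwa [det_transpose])]

theorem diag_eq_zero {M N : Matrix ι ι R} (h : Congruent M N) (hM : Mᵀ = -M)
    (hd : ∀ i, M i i = 0) (i : ι) : N i i = 0 := by
  obtain ⟨A, -, rfl⟩ := h
  simpa [mul_apply, dotProduct, vecMul] using vecMul_dotProduct_self_eq_zero hM hd (A i)

end Congruent

theorem congruent_submatrix_perm (M : Matrix ι ι R) (σ : Equiv.Perm ι) :
    Congruent M (M.submatrix σ σ) := by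
  refine ⟨σ.permMatrix R, ?_, ?_⟩
  · rw [det_permutation]; exact (Units.isUnit _).map (Int.castRingHom R)
  · rw [transpose_permMatrix, PEquiv.toMatrix_toPEquiv_mul, PEquiv.mul_toMatrix_toPEquiv]
    rfl

theorem congruent_fromBlocks_of_invertible₁₁ (A : Matrix s s R) (C : Matrix s t R)
    (D : Matrix t t R) [Invertible A] (hA : Aᵀ = A) :
    Congruent (fromBlocks A C Cᵀ D) (fromBlocks A 0 0 (D - Cᵀ * ⅟A * C)) := by
  have hinv : A⁻¹ᵀ = A⁻¹ := by rw [transpose_nonsing_inv, hA]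
  refine Congruent.symm ⟨Matrix.fromBlocks 1 0 (Cᵀ * ⅟A) 1, by simp, ?_⟩
  rw [fromBlocks_eq_of_invertible₁₁ A C Cᵀ D, fromBlocks_transpose]
  simp [hinv]

end CommRing

theorem exists_congruent_fromBlocks_toBlock {ι R : Type*} [DecidableEq ι] [CommRing R]
    {M : Matrix ι ι R} (hM : Mᵀ = M) (p : ι → Prop)
    [DecidablePred p] [Fintype {a // p a}] [Fintype {a // ¬p a}]
    (hp : IsUnit (M.toBlock p p).det) :
    ∃ S : Matrix {a // ¬p a} {a // ¬p a} R, Sᵀ = S ∧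
      Congruent (M.submatrix (Equiv.sumCompl p) (Equiv.sumCompl p))
        (Matrix.fromBlocks (M.toBlock p p) 0 0 S) := by
  let _ := invertibleOfIsUnitDet _ hp
  have h := congruent_fromBlocks_of_invertible₁₁ (M.toBlock p p) (M.toBlock p (¬p ·))
    (M.toBlock (¬p ·) (¬p ·)) (transpose_toBlock hM p p)
  rw [transpose_toBlock hM, ← submatrix_sumCompl] at h
  exact ⟨_, transpose_eq_of_fromBlocks (h.transpose_eq (by rw [transpose_submatrix, hM])), h⟩

section Field

variable {ι s t K : Type*} [Fintype ι] [DecidableEq ι] [Fintype s] [DecidableEq s] [Fintype t]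
  [DecidableEq t] [Field K]

/-- After the shear `fromBlocks 1 Z 0 1` with `Z = e_l`, where `S l k ≠ 0`, the Schur complement
has diagonal entry `-(S l k)² / b` at `k`, where `b` is the single entry of `B`. -/
theorem exists_congruent_fromBlocks_nonalternating [Unique s] {B : Matrix s s K}
    (hB : IsUnit B.det) {S : Matrix t t K} (hS : Sᵀ = S) (hd : ∀ k, S k k = 0) (hS0 : S ≠ 0) :
    ∃ S' : Matrix t t K, S'ᵀ = S' ∧ (∃ k, S' k k ≠ 0) ∧
      Congruent (Matrix.fromBlocks B 0 0 S) (Matrix.fromBlocks B 0 0 S') := by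
  obtain ⟨l, k, hlk⟩ : ∃ l k, S l k ≠ 0 := by
    by_contra! h; exact hS0 (Matrix.ext h)
  let _ := invertibleOfIsUnitDet B hB
  set Z : Matrix s t K := of fun _ j => if j = l then 1 else 0
  have hZSZ : Z * S * Zᵀ = 0 := by ext a b; simp [mul_apply, Z, hd]
  have hshear : Congruent (Matrix.fromBlocks B 0 0 S) (Matrix.fromBlocks B (Z * S) (Z * S)ᵀ S) :=
    ⟨Matrix.fromBlocks 1 Z 0 1, by simp, by
      simp [fromBlocks_transpose, fromBlocks_multiply, hZSZ, transpose_mul, hS]⟩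
  have hBt : Bᵀ = B := by ext a b; rw [Subsingleton.elim a b]; rfl
  have h := hshear.trans (congruent_fromBlocks_of_invertible₁₁ B (Z * S) S hBt)
  refine ⟨_, transpose_eq_of_fromBlocks (h.transpose_eq ?_), ⟨k, ?_⟩, h⟩
  · simp [fromBlocks_transpose, hS, hBt]
  · have hB' : B default default ≠ 0 := by simpa [det_unique] using hB.ne_zero
    simp [mul_apply, Z, hd, hB', hlk]

theorem exists_congruent_diagonal {M : Matrix ι ι K} (hM : Mᵀ = M) (hd : ∃ i, M i i ≠ 0) :
    ∃ d : ι → K, Congruent M (diagonal d) := by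
  induction h : Fintype.card ι using Nat.strong_induction_on generalizing ι with
  | _ n ih =>
  obtain ⟨i, hi⟩ := hd
  let _ : Unique {a // a = i} := ⟨⟨⟨i, rfl⟩⟩, fun a => Subtype.ext a.2⟩
  have hB : M.toBlock (· = i) (· = i) = diagonal fun _ => M i i := by
    ext ⟨a, rfl⟩ ⟨b, rfl⟩; simp
  have hBu : IsUnit (M.toBlock (· = i) (· = i)).det := by simp [hB, hi]
  obtain ⟨S, hS, hMS⟩ := exists_congruent_fromBlocks_toBlock hM (· = i) hBu
  set B := M.toBlock (· = i) (· = i)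
  obtain ⟨d, hSd⟩ : ∃ d, Congruent (Matrix.fromBlocks B 0 0 S)
      (Matrix.fromBlocks B 0 0 (diagonal d)) := by
    by_cases hS0 : S = 0
    · exact ⟨0, .of_eq (by simp [hS0])⟩
    obtain ⟨S', hS', hS'd, hSS'⟩ : ∃ S' : Matrix {a // ¬a = i} {a // ¬a = i} K,
        S'ᵀ = S' ∧ (∃ k, S' k k ≠ 0) ∧
          Congruent (Matrix.fromBlocks B 0 0 S) (Matrix.fromBlocks B 0 0 S') := by
      by_cases hSd : ∀ k, S k k = 0
      · exact exists_congruent_fromBlocks_nonalternating hBu hS hSd hS0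
      · exact ⟨S, hS, not_forall.mp hSd, .refl _⟩
    have hcard : Fintype.card {a // ¬a = i} < n := h ▸ Fintype.card_subtype_lt (x := i) (by simp)
    obtain ⟨d, hd⟩ := ih _ hcard hS' hS'd rfl
    exact ⟨d, hSS'.trans (.fromBlocks (.refl B) hd)⟩
  have := (hMS.trans hSd).of_submatrix
  rw [hB, fromBlocks_diagonal, submatrix_diagonal_equiv] at this
  exact ⟨_, this⟩

end Field

section Pairing

variable {ι κ s t : Type*} [DecidableEq ι] [DecidableEq κ] [DecidableEq s] [DecidableEq t]

/-- For an involution `τ`: one hyperbolic plane `[[0,1],[1,0]]` on each 2-cycle `{i, τ i}`,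
and zero rows and columns at the fixed points. -/
def pairingMatrix {R : Type*} [Zero R] [One R] (τ : Equiv.Perm ι) : Matrix ι ι R :=
  of fun i j => if τ i = j ∧ i ≠ j then 1 else 0

section ZeroOne

variable {R : Type*} [Zero R] [One R]

theorem pairingMatrix_one : pairingMatrix (1 : Equiv.Perm ι) = (0 : Matrix ι ι R) := by
  ext; simp [pairingMatrix]

theorem pairingMatrix_submatrix (τ : Equiv.Perm ι) (e : κ ≃ ι) :
    (pairingMatrix τ : Matrix ι ι R).submatrix e e = pairingMatrix (e.symm.permCongr τ) := by
  ext i j; simp [pairingMatrix, Equiv.symm_apply_eq]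

theorem fromBlocks_pairingMatrix (τ₁ : Equiv.Perm s) (τ₂ : Equiv.Perm t) :
    fromBlocks (pairingMatrix τ₁) 0 0 (pairingMatrix τ₂) =
      (pairingMatrix (Equiv.sumCongr τ₁ τ₂) : Matrix (s ⊕ t) (s ⊕ t) R) := by
  ext (i | i) (j | j) <;> simp [pairingMatrix]

end ZeroOne

variable [Fintype ι]

theorem pairingMatrix_mul_self {R : Type*} [NonAssocSemiring R]
    {τ : Equiv.Perm ι} (hτ : Function.Involutive τ)
    (hfix : ∀ i, τ i ≠ i) : (pairingMatrix τ * pairingMatrix τ : Matrix ι ι R) = 1 := by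
  have h : ∀ a b, (τ a = b ∧ a ≠ b) ↔ τ a = b :=
    fun a b => ⟨And.left, fun h => ⟨h, fun hab => hfix a (hab ▸ h)⟩⟩
  have hP : (pairingMatrix τ : Matrix ι ι R) = of fun i j => if τ i = j then 1 else 0 := by
    ext; simp only [pairingMatrix, of_apply, h]
  ext i j
  simp only [hP, mul_apply, of_apply, one_apply, mul_ite, mul_one, mul_zero]
  rw [Finset.sum_eq_single (τ i) (fun k _ hk => by simp [Ne.symm hk]) (by simp)]
  simp [hτ i]

theorem rank_pairingMatrix {K : Type*} [Field K] {τ : Equiv.Perm ι}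
    (hτ : Function.Involutive τ) :
    (pairingMatrix τ : Matrix ι ι K).rank = τ.support.card := by
  classical
  have h : (pairingMatrix τ : Matrix ι ι K) =
      (diagonal fun i => if τ i ≠ i then 1 else 0).submatrix (Equiv.refl ι) τ := by
    ext i j
    simp [pairingMatrix, diagonal_apply, ← hτ.eq_iff (x := i), eq_comm (a := i)]
    split_ifs <;> simp_all
  rw [h, rank_submatrix, rank_diagonal, Fintype.card_subtype]
  simp [Equiv.Perm.support]

theorem exists_congruent_pairingMatrix {M : Matrix ι ι (ZMod 2)} (hM : Mᵀ = M)
    (hd : ∀ i, M i i = 0) :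
    ∃ τ : Equiv.Perm ι, Function.Involutive τ ∧ Congruent M (pairingMatrix τ) := by
  induction h : Fintype.card ι using Nat.strong_induction_on generalizing ι with
  | _ n ih =>
  by_cases hM0 : M = 0
  · exact ⟨1, fun _ => rfl, .of_eq (by rw [hM0, pairingMatrix_one])⟩
  obtain ⟨i, j, hij⟩ : ∃ i j, M i j ≠ 0 := by
    by_contra! h; exact hM0 (Matrix.ext h)
  have hne : i ≠ j := by rintro rfl; exact hij (hd i)
  have hij1 : M i j = 1 := Fin.eq_one_of_ne_zero _ hij
  have hji1 : M j i = 1 := by rw [← hM, transpose_apply, hij1]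
  set p : ι → Prop := fun a => a = i ∨ a = j
  set τ₀ : Equiv.Perm {a // p a} := Equiv.swap ⟨i, .inl rfl⟩ ⟨j, .inr rfl⟩
  have hτ₀ : Function.Involutive τ₀ := Equiv.swap_apply_self _ _
  have hB : M.toBlock p p = pairingMatrix τ₀ := by
    ext ⟨a, rfl | rfl⟩ ⟨b, rfl | rfl⟩ <;>
      simp [pairingMatrix, τ₀, hd, hij1, hji1, hne, hne.symm]
  have hBu : IsUnit (M.toBlock p p).det := by
    refine hB ▸ isUnit_det_of_left_inverse (pairingMatrix_mul_self hτ₀ ?_)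
    rintro ⟨a, rfl | rfl⟩ h <;> dsimp only [τ₀] at h
    · rw [Equiv.swap_apply_left] at h; exact hne.symm (congrArg Subtype.val h)
    · rw [Equiv.swap_apply_right] at h; exact hne (congrArg Subtype.val h)
  obtain ⟨S, hS, hMS⟩ := exists_congruent_fromBlocks_toBlock hM p hBu
  have hskew : (M.submatrix (Equiv.sumCompl p) (Equiv.sumCompl p))ᵀ =
      -M.submatrix (Equiv.sumCompl p) (Equiv.sumCompl p) := by
    rw [transpose_submatrix, hM]; ext; simp [ZMod.neg_eq_self_mod_two]
  have hSd : ∀ k, S k k = 0 := fun k => by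
    simpa using hMS.diag_eq_zero hskew (fun a => by simp [hd]) (.inr k)
  have hcard : Fintype.card {a // ¬p a} < n := h ▸ Fintype.card_subtype_lt (x := i) (by simp [p])
  obtain ⟨τ₁, hτ₁, hSτ⟩ := ih _ hcard hS hSd rfl
  have := (hMS.trans (.fromBlocks (.refl _) hSτ)).of_submatrix
  rw [hB, fromBlocks_pairingMatrix, pairingMatrix_submatrix] at this
  exact ⟨_, fun a => by simp [hτ₀.comp_self, hτ₁.comp_self], this⟩

end Pairing

end Matrix

namespace Equiv.Perm

theorem exists_apply_iff_of_card_eq {α : Type*} [Fintype α] {p q : α → Prop}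
    [DecidablePred p] [DecidablePred q]
    (h : Fintype.card {i // q i} = Fintype.card {i // p i}) :
    ∃ σ : Perm α, ∀ i, p (σ i) ↔ q i := by
  let e := Fintype.equivOfCardEq h
  refine ⟨e.extendSubtype, fun i => ⟨fun hp => ?_, e.extendSubtype_mem i⟩⟩
  exact by_contra fun hq => e.extendSubtype_not_mem i hq hp

variable {α : Type*} [Fintype α] [DecidableEq α]

theorem cycleType_of_sq_eq_one {σ : Perm α} (hσ : σ ^ 2 = 1) :
    σ.cycleType = Multiset.replicate (σ.support.card / 2) 2 := by
  have h := cycleType_of_pow_prime_eq_one hσ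
  have hsum := σ.sum_cycleType
  rw [h, Multiset.sum_replicate, smul_eq_mul] at hsum
  rw [h, ← hsum, Nat.mul_div_cancel _ two_pos]

theorem isConj_of_sq_eq_one {σ τ : Perm α} (hσ : σ ^ 2 = 1) (hτ : τ ^ 2 = 1)
    (h : σ.support.card = τ.support.card) : IsConj σ τ := by
  rw [isConj_iff_cycleType_eq, cycleType_of_sq_eq_one hσ, cycleType_of_sq_eq_one hτ, h]

end Equiv.Perm

namespace Fin

def revInitial {g m : ℕ} (hm : m ≤ g) : Equiv.Perm (Fin g) :=
  Function.Involutive.toPerm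
    (fun i => ⟨if (i : ℕ) < m then m - 1 - i else i, by split_ifs <;> omega⟩)
    (fun i => by ext; dsimp only; split_ifs <;> omega)

theorem revInitial_apply {g m : ℕ} (hm : m ≤ g) (i : Fin g) :
    (revInitial hm i : ℕ) = if (i : ℕ) < m then m - 1 - i else i := rfl

end Fin

theorem congruent_diagonal_zmod_two {g : ℕ} (d : Fin g → ZMod 2) :
    Congruent (diagonal d) (of fun i j : Fin g =>
      if i = j ∧ (i : ℕ) < Fintype.card {i // d i ≠ 0} then 1 else 0) := by
  set m := Fintype.card {i // d i ≠ 0}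
  have hm : Fintype.card {i : Fin g // (i : ℕ) < m} = m := by
    rw [Fintype.card_subtype, Fin.card_filter_val_lt, min_eq_right]
    exact (Fintype.card_subtype_le _).trans_eq (Fintype.card_fin g)
  obtain ⟨σ, hσ⟩ := Equiv.Perm.exists_apply_iff_of_card_eq (p := (d · ≠ 0))
    (q := fun i : Fin g => (i : ℕ) < m) hm
  refine (congruent_submatrix_perm _ σ).trans (.of_eq ?_)
  ext i j
  by_cases hij : i = j
  · subst hij
    by_cases hi : (i : ℕ) < m
    · have : d (σ i) = 1 := Fin.eq_one_of_ne_zero _ ((hσ i).mpr hi)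
      simp [hi, this]
    · simpa [hi] using (hσ i).not.mpr hi
  · simp [hij]

theorem congruent_pairingMatrix_antidiagonal {g : ℕ} {R : Type*} [CommRing R]
    {τ : Equiv.Perm (Fin g)} (hτ : Function.Involutive τ) :
    Congruent (pairingMatrix τ : Matrix (Fin g) (Fin g) R) (of fun i j : Fin g =>
      if (i : ℕ) + j + 1 = τ.support.card then 1 else 0) := by
  set m := τ.support.card
  have hτ2 : τ ^ 2 = 1 := Equiv.ext fun i => by simp [sq, hτ i]
  have hm : m ≤ g := (Finset.card_le_univ _).trans_eq (Fintype.card_fin g)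
  obtain ⟨k, hk⟩ : 2 ∣ m := Equiv.Perm.two_dvd_card_support hτ2
  set ρ := Fin.revInitial hm
  have hρ2 : ρ ^ 2 = 1 := Equiv.ext fun i => by
    ext
    simp only [sq, Equiv.Perm.mul_apply, ρ, Fin.revInitial_apply]
    split_ifs <;> simp <;> omega
  have hρ : ρ.support.card = m := by
    have : ρ.support = Finset.univ.filter fun i : Fin g => (i : ℕ) < m := by
      ext i; simp [Equiv.Perm.mem_support, Fin.ext_iff, ρ, Fin.revInitial_apply]; omega
    rw [this, Fin.card_filter_val_lt, min_eq_right hm]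
  obtain ⟨π, hπ⟩ := isConj_iff.mp (Equiv.Perm.isConj_of_sq_eq_one hτ2 hρ2 hρ.symm)
  have hconj : (π⁻¹ : Equiv.Perm (Fin g)).symm.permCongr τ = ρ := by
    rw [← hπ]; ext x; simp [Equiv.Perm.inv_def]
  refine (congruent_submatrix_perm _ π⁻¹).trans (.of_eq ?_)
  rw [pairingMatrix_submatrix, hconj]
  ext i j
  simp only [pairingMatrix, of_apply, Ne, Fin.ext_iff, ρ, Fin.revInitial_apply]
  split_ifs <;> first | rfl | omega

theorem stmt_6_general (g : ℕ) (N : Matrix (Fin g) (Fin g) (ZMod 2))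
    (hsym : Nᵀ = N) :
    ∃ A : Matrix (Fin g) (Fin g) (ZMod 2), IsUnit A.det ∧
      ((∏ k : Fin g, (1 - N k k)) = 0 →
        A * N * Aᵀ = Matrix.of fun i j : Fin g =>
          if i = j ∧ (i : ℕ) < N.rank then 1 else 0) ∧
      ((∏ k : Fin g, (1 - N k k)) = 1 →
        A * N * Aᵀ = Matrix.of fun i j : Fin g =>
          if (i : ℕ) + (j : ℕ) + 1 = N.rank then 1 else 0) := by
  by_cases hd : ∀ k, N k k = 0
  · obtain ⟨τ, hτ, hNτ⟩ := exists_congruent_pairingMatrix hsym hd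
    have hrank : N.rank = τ.support.card := by rw [← hNτ.rank_eq, rank_pairingMatrix hτ]
    obtain ⟨A, hA, hAN⟩ := hNτ.trans (congruent_pairingMatrix_antidiagonal hτ)
    exact ⟨A, hA, fun h0 => absurd h0 (by simp [hd]), fun _ => by rw [hAN, hrank]⟩
  · obtain ⟨k, hk⟩ := not_forall.mp hd
    obtain ⟨d, hNd⟩ := exists_congruent_diagonal hsym ⟨k, hk⟩
    have hrank : N.rank = Fintype.card {i // d i ≠ 0} := by rw [← hNd.rank_eq, rank_diagonal]
    obtain ⟨A, hA, hAN⟩ := hNd.trans (congruent_diagonal_zmod_two d)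
    refine ⟨A, hA, fun _ => by rw [hAN, hrank], fun h1 => absurd h1 ?_⟩
    rw [Finset.prod_eq_zero (Finset.mem_univ k) (by rw [Fin.eq_one_of_ne_zero _ hk]; rfl)]
    decide

/-- (Albert) Every symmetric matrix `N` over `ℤ/2ℤ` of rank `λ` is equivalent
mod `GL(g, ℤ/2ℤ)` to `(I_λ 0; 0 0)` if `π(N) = ∏ (1 - n_kk) = 0`, and to
`(H_λ 0; 0 0)` if `π(N) = 1`, where `H_λ` is the λ×λ antidiagonal matrix. -/
theorem stmt_6 (g : ℕ) (hg : 1 ≤ g) (N : Matrix (Fin g) (Fin g) (ZMod 2))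
    (hsym : Nᵀ = N) :
    ∃ A : Matrix (Fin g) (Fin g) (ZMod 2), IsUnit A.det ∧
      ((∏ k : Fin g, (1 - N k k)) = 0 →
        A * N * Aᵀ = Matrix.of fun i j : Fin g =>
          if i = j ∧ (i : ℕ) < N.rank then 1 else 0) ∧
      ((∏ k : Fin g, (1 - N k k)) = 1 →
        A * N * Aᵀ = Matrix.of fun i j : Fin g =>
          if (i : ℕ) + (j : ℕ) + 1 = N.rank then 1 else 0) :=
  stmt_6_general g N hsym
end

section
/- Let g ≥ 1. For every W ∈ 𝔻_g, the matrix I_g − W is invertible and Φ_g(W) := i(I_g + W)(I_g − W)⁻¹ lies in ℍ_g. For every Ω ∈ ℍ_g, the matrix Ω + iI_g is invertible and Ψ_g(Ω) := (Ω − iI_g)(Ω + iI_g)⁻¹ lies in 𝔻_g. Moreover Ψ_g(Φ_g(W)) = W for all W ∈ 𝔻_g and Φ_g(Ψ_g(Ω)) = Ω for all Ω ∈ ℍ_g; hence the Cayley transform Φ_g is a bijection from 𝔻_g onto ℍ_g with inverse Ψ_g. -/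
/-!
Write `Z = (1 + W)(1 - W)⁻¹`, so that `Φ(W) = i Z`; for symmetric `W` the imaginary part of `Φ(W)`
is the hermitian part `(Z + Zᴴ) / 2`. Conjugating by `1 - W` gives
`(1 - W)ᴴ (Z + Zᴴ) (1 - W) = (1 - W)ᴴ (1 + W) + (1 + W)ᴴ (1 - W) = 2 (1 - Wᴴ W)`,
so `Im Φ(W)` is congruent to `1 - W̄ W`, and congruence by an invertible matrix preserves positive
definiteness. This gives `Φ(𝔻_g) ⊆ ℍ_g`; applied to `W = Ψ(Ω)`, for which `Φ(W) = Ω`, it gives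
`Ψ(ℍ_g) ⊆ 𝔻_g`. Invertibility of `1 - W` and of `Ω + iI` comes from the same kind of identity:
if `Xᴴ Y + Yᴴ X` is positive definite then `X` has trivial kernel.
-/

open Matrix
open scoped ComplexOrder

/-- Membership in the Siegel upper half space `ℍ_g`. -/
def inSiegel (g : ℕ) (Ω : Matrix (Fin g) (Fin g) ℂ) : Prop :=
  Ωᵀ = Ω ∧ (Ω.map Complex.im).PosDef

/-- Membership in the generalized unit disk `𝔻_g`. -/
def inDisk (g : ℕ) (W : Matrix (Fin g) (Fin g) ℂ) : Prop :=
  Wᵀ = W ∧ (1 - W.map (starRingEnd ℂ) * W).PosDef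

/-- The Cayley transform `Φ_g(W) = i(I + W)(I − W)⁻¹`. -/
noncomputable def cayley (g : ℕ) (W : Matrix (Fin g) (Fin g) ℂ) :
    Matrix (Fin g) (Fin g) ℂ := Complex.I • ((1 + W) * (1 - W)⁻¹)

/-- The inverse Cayley transform `Ψ_g(Ω) = (Ω − iI)(Ω + iI)⁻¹`. -/
noncomputable def cayleyInv (g : ℕ) (Ω : Matrix (Fin g) (Fin g) ℂ) :
    Matrix (Fin g) (Fin g) ℂ := (Ω - Complex.I • 1) * (Ω + Complex.I • 1)⁻¹

namespace Matrix

variable {n : Type*}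

lemma map_starRingEnd_eq_conjTranspose {W : Matrix n n ℂ} (h : Wᵀ = W) :
    W.map (starRingEnd ℂ) = Wᴴ := by
  rw [conjTranspose, h]
  rfl

lemma two_smul_map_ofReal_map_im {M : Matrix n n ℂ} (h : Mᵀ = M) :
    (2 : ℂ) • (M.map Complex.im).map Complex.ofReal = Complex.I • (Mᴴ - M) := by
  ext i j
  have hij : M j i = M i j := congrFun (congrFun h i) j
  apply Complex.ext <;> simp [hij, two_mul]

lemma map_ofReal_conjTranspose (N : Matrix n n ℝ) :
    Nᴴ.map Complex.ofReal = (N.map Complex.ofReal)ᴴ := by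
  ext
  simp

variable [Fintype n]

lemma dotProduct_map_ofReal_mulVec (N : Matrix n n ℝ) (x : n → ℝ) :
    star (Complex.ofReal ∘ x) ⬝ᵥ (N.map Complex.ofReal *ᵥ (Complex.ofReal ∘ x)) =
      x ⬝ᵥ (N *ᵥ x) := by
  have hx : star (Complex.ofReal ∘ x) = Complex.ofReal ∘ x := by
    ext
    simp
  have hNx : N.map Complex.ofReal *ᵥ (Complex.ofReal ∘ x) = Complex.ofReal ∘ (N *ᵥ x) :=
    funext fun i => (RingHom.map_mulVec Complex.ofRealHom N x i).symm
  rw [hx, hNx]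
  exact (RingHom.map_dotProduct Complex.ofRealHom x (N *ᵥ x)).symm

variable [DecidableEq n]

open scoped MatrixOrder in
lemma posDef_map_ofReal_iff {N : Matrix n n ℝ} :
    (N.map Complex.ofReal).PosDef ↔ N.PosDef := by
  constructor
  · intro h
    refine .of_dotProduct_mulVec_pos ?_ fun x hx => ?_
    · have hherm := h.isHermitian
      rw [IsHermitian, ← map_ofReal_conjTranspose] at hherm
      exact map_injective Complex.ofReal_injective hherm
    · have hx' : Complex.ofReal ∘ x ≠ 0 := fun h0 =>
        hx (funext fun i => by simpa using congrFun h0 i)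
      simpa [dotProduct_map_ofReal_mulVec] using h.dotProduct_mulVec_pos hx'
  · intro h
    have hsemi : (N.map Complex.ofReal).PosSemidef := by
      obtain ⟨B, rfl⟩ := CStarAlgebra.nonneg_iff_eq_star_mul_self.mp h.posSemidef.nonneg
      have hmap : (star B * B).map Complex.ofReal = Bᴴ.map Complex.ofReal * B.map Complex.ofReal :=
        Matrix.map_mul (f := Complex.ofRealHom)
      rw [hmap, map_ofReal_conjTranspose]
      exact posSemidef_conjTranspose_mul_self _
    exact hsemi.posDef_iff_isUnit.mpr (h.isUnit.map Complex.ofRealHom.mapMatrix)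

lemma commute_nonsing_inv_right {α : Type*} [CommRing α] {A B : Matrix n n α}
    (h : Commute A B) : Commute A B⁻¹ := by
  rw [nonsing_inv_eq_ringInverse]
  by_cases hB : IsUnit B
  · obtain ⟨u, rfl⟩ := hB
    rw [Ring.inverse_unit]
    exact h.units_inv_right
  · rw [Ring.inverse_non_unit _ hB]
    exact Commute.zero_right A

lemma transpose_mul_nonsing_inv_of_commute {α : Type*} [CommRing α] {P Q : Matrix n n α}
    (hP : Pᵀ = P) (hQ : Qᵀ = Q) (hPQ : Commute P Q) : (P * Q⁻¹)ᵀ = P * Q⁻¹ := by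
  rw [transpose_mul, transpose_nonsing_inv, hP, hQ, (commute_nonsing_inv_right hPQ).eq]

lemma isUnit_det_of_posDef_conjTranspose_mul_add {𝕜 : Type*} [RCLike 𝕜]
    {X Y : Matrix n n 𝕜} (h : (Xᴴ * Y + Yᴴ * X).PosDef) : IsUnit X.det := by
  rw [isUnit_iff_ne_zero]
  intro hX
  obtain ⟨v, hv, hXv⟩ := exists_mulVec_eq_zero_iff.mpr hX
  have hq : star v ⬝ᵥ ((Xᴴ * Y + Yᴴ * X) *ᵥ v) = 0 := by
    rw [add_mulVec, ← mulVec_mulVec, ← mulVec_mulVec, hXv, mulVec_zero, add_zero,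
      dotProduct_mulVec, ← star_mulVec, hXv, star_zero, zero_dotProduct]
  exact (h.dotProduct_mulVec_pos hv).ne' hq

lemma conjTranspose_mul_mul_nonsing_inv_add {α : Type*} [CommRing α] [StarRing α]
    {A : Matrix n n α} (hA : IsUnit A.det) (B : Matrix n n α) :
    Aᴴ * (B * A⁻¹ + (B * A⁻¹)ᴴ) * A = Aᴴ * B + Bᴴ * A := by
  rw [conjTranspose_mul, conjTranspose_nonsing_inv, mul_add, add_mul, mul_assoc, mul_assoc,
    nonsing_inv_mul _ hA, mul_one, ← mul_assoc, mul_nonsing_inv _ (by simpa using hA.star),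
    one_mul]

lemma conjTranspose_one_sub_mul_one_add_add {α : Type*} [CommRing α] [StarRing α]
    (W : Matrix n n α) :
    (1 - W)ᴴ * (1 + W) + (1 + W)ᴴ * (1 - W) = (1 - Wᴴ * W) + (1 - Wᴴ * W) := by
  rw [conjTranspose_sub, conjTranspose_add, conjTranspose_one]
  noncomm_ring

end Matrix

variable {g : ℕ} {W Ω : Matrix (Fin g) (Fin g) ℂ}

lemma cayley_transpose (hW : Wᵀ = W) : (cayley g W)ᵀ = cayley g W := by
  rw [cayley, transpose_smul, transpose_mul_nonsing_inv_of_commute (by simp [hW]) (by simp [hW])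
    ((Commute.one_right _).sub_right ((Commute.one_left W).add_left (Commute.refl W)))]

lemma cayleyInv_transpose (hΩ : Ωᵀ = Ω) : (cayleyInv g Ω)ᵀ = cayleyInv g Ω :=
  transpose_mul_nonsing_inv_of_commute (by simp [hΩ]) (by simp [hΩ])
    (((Commute.refl Ω).sub_left ((Commute.one_left Ω).smul_left _)).add_right
      ((Commute.one_right _).smul_right _))

lemma cayley_add_I_smul_one (h : IsUnit (1 - W).det) :
    cayley g W + Complex.I • 1 = (2 * Complex.I) • (1 - W)⁻¹ := by
  calc cayley g W + Complex.I • 1 = Complex.I • ((1 + W + (1 - W)) * (1 - W)⁻¹) := by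
        rw [cayley, add_mul (1 + W), mul_nonsing_inv _ h, smul_add]
    _ = (2 * Complex.I) • (1 - W)⁻¹ := by
        rw [show 1 + W + (1 - W) = (2 : ℂ) • (1 : Matrix (Fin g) (Fin g) ℂ) by module,
          smul_mul_assoc, one_mul, smul_smul, mul_comm]

lemma cayley_sub_I_smul_one (h : IsUnit (1 - W).det) :
    cayley g W - Complex.I • 1 = (2 * Complex.I) • (W * (1 - W)⁻¹) := by
  calc cayley g W - Complex.I • 1 = Complex.I • ((1 + W - (1 - W)) * (1 - W)⁻¹) := by
        rw [cayley, sub_mul (1 + W), mul_nonsing_inv _ h, smul_sub]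
    _ = (2 * Complex.I) • (W * (1 - W)⁻¹) := by
        rw [show 1 + W - (1 - W) = (2 : ℂ) • W by module, smul_mul_assoc, smul_smul, mul_comm]

lemma cayleyInv_cayley (h : IsUnit (1 - W).det) : cayleyInv g (cayley g W) = W := by
  have h2I : 2 * Complex.I ≠ 0 := by simp
  have := invertibleOfNonzero h2I
  rw [cayleyInv, cayley_add_I_smul_one h, cayley_sub_I_smul_one h,
    inv_smul _ _ (isUnit_nonsing_inv_det _ h), nonsing_inv_nonsing_inv _ h, invOf_eq_inv,
    smul_mul_smul_comm, mul_inv_cancel₀ h2I, one_smul, mul_assoc, nonsing_inv_mul _ h, mul_one]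

lemma one_sub_cayleyInv (h : IsUnit (Ω + Complex.I • 1).det) :
    1 - cayleyInv g Ω = (2 * Complex.I) • (Ω + Complex.I • 1)⁻¹ := by
  calc 1 - cayleyInv g Ω
      = (Ω + Complex.I • 1 - (Ω - Complex.I • 1)) * (Ω + Complex.I • 1)⁻¹ := by
        rw [cayleyInv, sub_mul (Ω + Complex.I • 1), mul_nonsing_inv _ h]
    _ = (2 * Complex.I) • (Ω + Complex.I • 1)⁻¹ := by
        rw [show Ω + Complex.I • 1 - (Ω - Complex.I • 1) =
            (2 * Complex.I) • (1 : Matrix (Fin g) (Fin g) ℂ) by module,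
          smul_mul_assoc, one_mul]

lemma one_add_cayleyInv (h : IsUnit (Ω + Complex.I • 1).det) :
    1 + cayleyInv g Ω = (2 : ℂ) • (Ω * (Ω + Complex.I • 1)⁻¹) := by
  calc 1 + cayleyInv g Ω
      = (Ω + Complex.I • 1 + (Ω - Complex.I • 1)) * (Ω + Complex.I • 1)⁻¹ := by
        rw [cayleyInv, add_mul (Ω + Complex.I • 1), mul_nonsing_inv _ h]
    _ = (2 : ℂ) • (Ω * (Ω + Complex.I • 1)⁻¹) := by
        rw [show Ω + Complex.I • 1 + (Ω - Complex.I • 1) = (2 : ℂ) • Ω by module, smul_mul_assoc]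

lemma cayley_cayleyInv (h : IsUnit (Ω + Complex.I • 1).det) : cayley g (cayleyInv g Ω) = Ω := by
  have h2I : 2 * Complex.I ≠ 0 := by simp
  have := invertibleOfNonzero h2I
  rw [cayley, one_add_cayleyInv h, one_sub_cayleyInv h,
    inv_smul _ _ (isUnit_nonsing_inv_det _ h), nonsing_inv_nonsing_inv _ h, invOf_eq_inv,
    smul_mul_smul_comm, mul_assoc, nonsing_inv_mul _ h, mul_one, smul_smul,
    show Complex.I * (2 * (2 * Complex.I)⁻¹) = 1 by field_simp, one_smul]

lemma conjTranspose_one_sub_mul_im_cayley_mul (hW : Wᵀ = W) (h : IsUnit (1 - W).det) :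
    (1 - W)ᴴ * ((cayley g W).map Complex.im).map Complex.ofReal * (1 - W) = 1 - Wᴴ * W := by
  set Z := (1 + W) * (1 - W)⁻¹
  have hZ : Complex.I • ((cayley g W)ᴴ - cayley g W) = Z + Zᴴ := by
    rw [cayley, conjTranspose_smul, Complex.star_def, Complex.conj_I, smul_sub, smul_smul, smul_smul,
      mul_neg, Complex.I_mul_I, neg_neg, one_smul, neg_one_smul, sub_neg_eq_add, add_comm]
  refine smul_right_injective _ (two_ne_zero (α := ℂ)) ?_
  calc (2 : ℂ) • ((1 - W)ᴴ * ((cayley g W).map Complex.im).map Complex.ofReal * (1 - W))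
      = (1 - W)ᴴ * ((2 : ℂ) • ((cayley g W).map Complex.im).map Complex.ofReal) * (1 - W) := by
        rw [mul_smul_comm, smul_mul_assoc]
    _ = (1 - W)ᴴ * (1 + W) + (1 + W)ᴴ * (1 - W) := by
        rw [two_smul_map_ofReal_map_im (cayley_transpose hW), hZ,
          conjTranspose_mul_mul_nonsing_inv_add h]
    _ = (2 : ℂ) • (1 - Wᴴ * W) := by
        rw [conjTranspose_one_sub_mul_one_add_add, two_smul]

lemma inDisk.isUnit_det_one_sub (hW : inDisk g W) : IsUnit (1 - W).det := by
  refine isUnit_det_of_posDef_conjTranspose_mul_add (Y := 1 + W) ?_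
  rw [conjTranspose_one_sub_mul_one_add_add, ← map_starRingEnd_eq_conjTranspose hW.1]
  exact hW.2.add hW.2

lemma inDisk.inSiegel_cayley (hW : inDisk g W) : inSiegel g (cayley g W) := by
  have h := hW.isUnit_det_one_sub
  refine ⟨cayley_transpose hW.1, posDef_map_ofReal_iff.mp ?_⟩
  rw [← (isUnit_iff_isUnit_det _ |>.mpr h).posDef_star_left_conjugate_iff, star_eq_conjTranspose,
    conjTranspose_one_sub_mul_im_cayley_mul hW.1 h, ← map_starRingEnd_eq_conjTranspose hW.1]
  exact hW.2

lemma inSiegel.isUnit_det_add_I_smul_one (hΩ : inSiegel g Ω) :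
    IsUnit (Ω + Complex.I • 1).det := by
  set imΩ := (Ω.map Complex.im).map Complex.ofReal
  refine isUnit_det_of_posDef_conjTranspose_mul_add (Y := Complex.I • 1) ?_
  have hsum : (Ω + Complex.I • 1)ᴴ * (Complex.I • 1) + (Complex.I • 1)ᴴ * (Ω + Complex.I • 1) =
      (imΩ + 1) + (imΩ + 1) := by
    calc _ = Complex.I • (Ωᴴ - Ω) + (2 : ℂ) • 1 := by
          simp only [conjTranspose_add, conjTranspose_smul, conjTranspose_one, Complex.star_def,
            Complex.conj_I, add_mul, mul_add, Matrix.mul_smul, Matrix.smul_mul, mul_one, one_mul,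
            smul_smul, mul_neg, Complex.I_mul_I]
          module
      _ = (imΩ + 1) + (imΩ + 1) := by
          rw [← two_smul_map_ofReal_map_im hΩ.1, ← smul_add, two_smul]
  have himΩ : (imΩ + 1).PosDef := (posDef_map_ofReal_iff.mpr hΩ.2).add PosDef.one
  rw [hsum]
  exact himΩ.add himΩ

lemma inSiegel.inDisk_cayleyInv (hΩ : inSiegel g Ω) : inDisk g (cayleyInv g Ω) := by
  have hC := hΩ.isUnit_det_add_I_smul_one
  have hV := cayleyInv_transpose (g := g) hΩ.1
  have h : IsUnit (1 - cayleyInv g Ω).det := by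
    rw [one_sub_cayleyInv hC, det_smul]
    exact (IsUnit.pow _ (by simp)).mul (isUnit_nonsing_inv_det _ hC)
  refine ⟨hV, ?_⟩
  rw [map_starRingEnd_eq_conjTranspose hV, ← conjTranspose_one_sub_mul_im_cayley_mul hV h,
    cayley_cayleyInv hC, ← star_eq_conjTranspose,
    (isUnit_iff_isUnit_det _ |>.mpr h).posDef_star_left_conjugate_iff]
  exact posDef_map_ofReal_iff.mpr hΩ.2

theorem stmt_7_general (g : ℕ) :
    (∀ W : Matrix (Fin g) (Fin g) ℂ, inDisk g W →
      IsUnit (1 - W).det ∧ inSiegel g (cayley g W)) ∧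
    (∀ Ω : Matrix (Fin g) (Fin g) ℂ, inSiegel g Ω →
      IsUnit (Ω + Complex.I • 1).det ∧ inDisk g (cayleyInv g Ω)) ∧
    (∀ W : Matrix (Fin g) (Fin g) ℂ, inDisk g W → cayleyInv g (cayley g W) = W) ∧
    (∀ Ω : Matrix (Fin g) (Fin g) ℂ, inSiegel g Ω → cayley g (cayleyInv g Ω) = Ω) :=
  ⟨fun _ hW => ⟨hW.isUnit_det_one_sub, hW.inSiegel_cayley⟩,
    fun _ hΩ => ⟨hΩ.isUnit_det_add_I_smul_one, hΩ.inDisk_cayleyInv⟩,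
    fun _ hW => cayleyInv_cayley hW.isUnit_det_one_sub,
    fun _ hΩ => cayley_cayleyInv hΩ.isUnit_det_add_I_smul_one⟩

/-- The Cayley transform is a bijection from `𝔻_g` onto `ℍ_g` with inverse `Ψ_g`. -/
theorem stmt_7 (g : ℕ) (hg : 1 ≤ g) :
    (∀ W : Matrix (Fin g) (Fin g) ℂ, inDisk g W →
      IsUnit (1 - W).det ∧ inSiegel g (cayley g W)) ∧
    (∀ Ω : Matrix (Fin g) (Fin g) ℂ, inSiegel g Ω →
      IsUnit (Ω + Complex.I • 1).det ∧ inDisk g (cayleyInv g Ω)) ∧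
    (∀ W : Matrix (Fin g) (Fin g) ℂ, inDisk g W → cayleyInv g (cayley g W) = W) ∧
    (∀ Ω : Matrix (Fin g) (Fin g) ℂ, inSiegel g Ω → cayley g (cayleyInv g Ω) = Ω) :=
  stmt_7_general g
end
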